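/- For every integer n ≥ 1, the formal power series A_n(z) + z·B_n(z)·tan_q(z) over K = ℚ(q) has vanishing coefficient of z^m for every integer m with 0 ≤ m ≤ 2n. Equivalently, the n-th convergent A_n/B_n of the continued fraction with partial denominators b_1, b_2, … and partial numerators −z² agrees with −z·tan_q(z) to order z^{2n} (this is Prodinger's conjectured continued fraction expansion −z·tan_q(z) = −z²/([1]_q q^0 − z²/([3]_q q^{−2} − z²/([5]_q q^1 − z²/([7]_q q^{−9} − ⋯)))) ). -/

import Mathlib

noncomputable section

/-- The field `K = ℚ(q)` of rational functions over `ℚ`. -/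
abbrev K : Type := RatFunc ℚ

/-- The indeterminate `q`. -/
def q : K := RatFunc.X

/-- The `q`-integer `[m]_q = (1 - q^m)/(1 - q)`, for any integer `m`. -/
def qint (m : ℤ) : K := (1 - q ^ m) / (1 - q)

/-- The `q`-factorial `[n]_q! = [1]_q [2]_q ⋯ [n]_q`. -/
def qfact : ℕ → K
  | 0 => 1
  | n + 1 => qfact n * qint (n + 1)

/-- `b 0 = 0` and `b n = [2n-1]_q q^{(-1)^(n-1) n(n-1)/2 - n + 1}` for `n ≥ 1`. -/
def b (n : ℕ) : K :=
  if n = 0 then 0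
  else qint (2 * n - 1) *
    q ^ ((-1 : ℤ) ^ (n - 1) * ((n : ℤ) * ((n : ℤ) - 1) / 2) - (n : ℤ) + 1)

/-- `A m` is the polynomial `A_{m-1}` of the paper (index shifted by one, so
`A 0 = A_{-1} = 1`, `A 1 = A_0 = 0`). -/
def A : ℕ → Polynomial K
  | 0 => 1
  | 1 => 0
  | (n + 2) => Polynomial.C (b (n + 1)) * A (n + 1) - Polynomial.X ^ 2 * A n

/-- `B m` is the polynomial `B_{m-1}` of the paper (index shifted by one, so
`B 0 = B_{-1} = 0`, `B 1 = B_0 = 1`). -/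
def B : ℕ → Polynomial K
  | 0 => 0
  | 1 => 1
  | (n + 2) => Polynomial.C (b (n + 1)) * B (n + 1) - Polynomial.X ^ 2 * B n

/-- `c n j` is the coefficient of `z^(2j)` in `A_n` (and `0` for `j < 0`). -/
def c (n : ℤ) (j : ℤ) : K :=
  if j < 0 then 0 else (A (n + 1).toNat).coeff (2 * j).toNat

/-- `d n j` is the coefficient of `z^(2j)` in `B_n` (and `0` for `j < 0`). -/
def d (n : ℤ) (j : ℤ) : K :=
  if j < 0 then 0 else (B (n + 1).toNat).coeff (2 * j).toNat

/-- `sin_q(z) = ∑ (-1)^n q^(n^2) z^(2n+1)/[2n+1]_q!` as a formal power series. -/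
def sinq : PowerSeries K :=
  PowerSeries.mk fun m =>
    if m % 2 = 1 then (-1 : K) ^ (m / 2) * q ^ ((m / 2) ^ 2) / qfact m else 0

/-- `cos_q(z) = ∑ (-1)^n q^(n^2) z^(2n)/[2n]_q!` as a formal power series. -/
def cosq : PowerSeries K :=
  PowerSeries.mk fun m =>
    if m % 2 = 0 then (-1 : K) ^ (m / 2) * q ^ ((m / 2) ^ 2) / qfact m else 0

/-- The `q`-Pochhammer symbol `(a; p)_m = (1-a)(1-ap)⋯(1-ap^(m-1))`. -/
def qpoch (a p : K) : ℕ → K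
  | 0 => 1
  | m + 1 => qpoch a p m * (1 - a * p ^ m)


/-- `tan_q = sin_q / cos_q` as a formal power series (`cos_q` has constant
term `1`, hence is invertible). -/
def tanq : PowerSeries K := sinq * cosq⁻¹

-- auxiliary
lemma q_ne_zero : q ≠ 0 := RatFunc.X_ne_zero

lemma one_sub_q_pow_ne_zero (m : ℕ) (hm : 1 ≤ m) : (1 : K) - q ^ m ≠ 0 := by
  have h : (1 : K) - q ^ m =
      algebraMap (Polynomial ℚ) (RatFunc ℚ) (1 - Polynomial.X ^ m) := by
    simp [q, ← RatFunc.algebraMap_X, map_sub, map_pow]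
  rw [h]
  intro hc
  have h2 : (1 - Polynomial.X ^ m : Polynomial ℚ) = 0 :=
    RatFunc.algebraMap_injective ℚ (by simpa using hc)
  have h3 := congrArg (fun P => Polynomial.coeff P m) h2
  simp only [Polynomial.coeff_sub, Polynomial.coeff_one, Polynomial.coeff_X_pow,
    Polynomial.coeff_zero] at h3
  simp [Nat.one_le_iff_ne_zero.mp hm] at h3

lemma one_sub_q_ne_zero : (1 : K) - q ≠ 0 := by
  simpa using one_sub_q_pow_ne_zero 1 le_rfl

/-- nat-power version of the q-integer -/
def Z (m : ℕ) : K := (1 - q ^ m) / (1 - q)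

lemma qint_natCast (m : ℕ) : qint (m : ℤ) = Z m := by
  rw [qint, Z, zpow_natCast]

lemma Z_ne_zero (m : ℕ) (hm : 1 ≤ m) : Z m ≠ 0 :=
  div_ne_zero (one_sub_q_pow_ne_zero m hm) one_sub_q_ne_zero

lemma Z_one : Z 1 = 1 := by
  rw [Z, pow_one, div_self one_sub_q_ne_zero]

lemma Z_add (a c : ℕ) : Z (a + c) = Z a + q ^ a * Z c := by
  rw [Z, Z, Z, pow_add]
  field_simp
  ring

lemma qfact_succ (n : ℕ) : qfact (n + 1) = qfact n * Z (n + 1) := by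
  rw [qfact, ← qint_natCast]; push_cast; ring_nf

lemma qfact_ne_zero (n : ℕ) : qfact n ≠ 0 := by
  induction n with
  | zero => simp [qfact]
  | succ n ih =>
      rw [qfact_succ]
      exact mul_ne_zero ih (Z_ne_zero _ (by omega))

lemma qfact_zero : qfact 0 = 1 := rfl

lemma b_odd (t : ℕ) : b (2 * t + 1) = Z (4 * t + 1) * q ^ (2 * t * t) / q ^ t := by
  rw [b, if_neg (by omega)]
  have h1 : (2 * ((2 * t + 1 : ℕ) : ℤ) - 1) = ((4 * t + 1 : ℕ) : ℤ) := by push_cast; ring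
  have h2 : ((2 * t + 1 : ℕ) - 1) = 2 * t := by omega
  have h3 : ((-1 : ℤ)) ^ (2 * t) = 1 := by
    rw [pow_mul]; norm_num
  have h4 : (((2 * t + 1 : ℕ) : ℤ) * (((2 * t + 1 : ℕ) : ℤ) - 1) / 2) = 2 * t * t + t := by
    have : (((2 * t + 1 : ℕ) : ℤ) * (((2 * t + 1 : ℕ) : ℤ) - 1)) = 2 * (2 * t * t + t) := by
      push_cast; ring
    rw [this, Int.mul_ediv_cancel_left _ (by norm_num)]
  rw [h1, h2, h3, h4, qint_natCast]
  have h5 : (1 * (2 * (t:ℤ) * t + t) - ((2 * t + 1 : ℕ) : ℤ) + 1)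
      = ((2 * t * t : ℕ) : ℤ) - ((t : ℕ) : ℤ) := by push_cast; ring
  rw [h5, zpow_sub₀ q_ne_zero, zpow_natCast, zpow_natCast]
  ring

lemma b_even (t : ℕ) : b (2 * t + 2) = Z (4 * t + 3) / q ^ ((2 * t + 1) * (t + 2)) := by
  rw [b, if_neg (by omega)]
  have h1 : (2 * ((2 * t + 2 : ℕ) : ℤ) - 1) = ((4 * t + 3 : ℕ) : ℤ) := by push_cast; ring
  have h2 : ((2 * t + 2 : ℕ) - 1) = 2 * t + 1 := by omega
  have h3 : ((-1 : ℤ)) ^ (2 * t + 1) = -1 := by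
    rw [pow_succ, pow_mul]; norm_num
  have h4 : (((2 * t + 2 : ℕ) : ℤ) * (((2 * t + 2 : ℕ) : ℤ) - 1) / 2)
      = 2 * t * t + 3 * t + 1 := by
    have : (((2 * t + 2 : ℕ) : ℤ) * (((2 * t + 2 : ℕ) : ℤ) - 1))
        = 2 * (2 * t * t + 3 * t + 1) := by push_cast; ring
    rw [this, Int.mul_ediv_cancel_left _ (by norm_num)]
  rw [h1, h2, h3, h4, qint_natCast]
  have h5 : ((-1) * (2 * (t:ℤ) * t + 3 * t + 1) - ((2 * t + 2 : ℕ) : ℤ) + 1)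
      = -(((2 * t + 1) * (t + 2) : ℕ) : ℤ) := by push_cast; ring
  rw [h5, zpow_neg, zpow_natCast]
  ring

lemma b_one : b 1 = 1 := by
  have := b_odd 0
  simpa [Z_one] using this

/-- exponent in the closed form of the remainder series -/
def E (n k : ℕ) : ℕ := (k + (n + 1) / 2) ^ 2 + n % 2 * ((n + 1) / 2) * n

/-- denominator product `∏_{i<n} [2(k+i)+3]` -/
def P (n k : ℕ) : K := ∏ i ∈ Finset.range n, Z (2 * (k + i) + 3)

/-- closed form for the coefficient of `z^{2(n+1+k)}` in `A_n cos_q + z B_n sin_q` -/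
def G (n k : ℕ) : K := (-1) ^ k * q ^ (E n k) / (qfact (2 * k + 1) * P n k)

lemma E_even (t k : ℕ) : E (2 * t) k = (k + t) ^ 2 := by
  have h1 : (2 * t + 1) / 2 = t := by omega
  have h2 : (2 * t) % 2 = 0 := by omega
  rw [E, h1, h2]; ring

lemma E_odd (t k : ℕ) : E (2 * t + 1) k = (k + t + 1) ^ 2 + (t + 1) * (2 * t + 1) := by
  have h1 : (2 * t + 1 + 1) / 2 = t + 1 := by omega
  have h2 : (2 * t + 1) % 2 = 1 := by omega
  rw [E, h1, h2]; ring

lemma P_ne_zero (n k : ℕ) : P n k ≠ 0 :=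
  Finset.prod_ne_zero_iff.mpr fun i _ => Z_ne_zero _ (by omega)

lemma P_zero (k : ℕ) : P 0 k = 1 := Finset.prod_range_zero _

lemma P_succ (n k : ℕ) : P (n + 1) k = Z (2 * k + 3) * P n (k + 1) := by
  rw [P, P, Finset.prod_range_succ', Nat.add_zero, mul_comm]
  congr 1
  apply Finset.prod_congr rfl
  intro i _
  congr 1
  omega

lemma P_succ_right (n k : ℕ) : P (n + 1) k = P n k * Z (2 * (k + n) + 3) :=
  Finset.prod_range_succ _ _

lemma qfact_two (k : ℕ) : qfact (2 * k + 3) = qfact (2 * k + 1) * Z (2 * k + 2) * Z (2 * k + 3) := by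
  have h1 := qfact_succ (2 * k + 2)
  have h2 := qfact_succ (2 * k + 1)
  rw [show 2*k+3 = 2*k+2+1 from rfl, h1, show 2*k+2 = 2*k+1+1 from rfl, h2]

/-- low-order cancellation: `b_{n+1} g_{n,0} = g_{n-1,0}` -/
lemma G_low (n : ℕ) (hn : 1 ≤ n) : b (n + 1) * G n 0 = G (n - 1) 0 := by
  rcases Nat.even_or_odd n with ⟨t, ht⟩ | ⟨t, ht⟩
  · -- n = 2t, t ≥ 1; write t = s+1
    obtain ⟨s, hs⟩ : ∃ s, t = s + 1 := ⟨t - 1, by omega⟩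
    subst hs
    have hn2 : n = 2 * s + 2 := by omega
    subst hn2
    have e1 : E (2 * s + 2) 0 = (s + 1) ^ 2 := by
      have := E_even (s + 1) 0; simpa [show 2*(s+1) = 2*s+2 by ring] using this
    have e2 : E (2 * s + 1) 0 = (s + 1) ^ 2 + (s + 1) * (2 * s + 1) := by
      simpa using E_odd s 0
    have hb : b (2 * s + 2 + 1) = Z (4 * (s + 1) + 1) * q ^ (2 * (s+1) * (s+1)) / q ^ (s+1) := by
      have := b_odd (s + 1); rw [show 2*(s+1)+1 = 2*s+2+1 by ring] at this; exact this
    rw [G, G, show (2*s+2 : ℕ) - 1 = 2*s+1 by omega, hb, e1, e2]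
    have hp : P (2 * s + 2) 0 = P (2 * s + 1) 0 * Z (4 * (s + 1) + 1) := by
      have := P_succ_right (2 * s + 1) 0
      rw [this]; congr 2; omega
    rw [hp]
    have hq := q_ne_zero
    have hz := Z_ne_zero (4 * (s + 1) + 1) (by omega)
    have hf := qfact_ne_zero 1
    have hP := P_ne_zero (2 * s + 1) 0
    field_simp
    ring
  · -- n = 2t+1
    subst ht
    have e1 : E (2 * t + 1) 0 = (t + 1) ^ 2 + (t + 1) * (2 * t + 1) := by simpa using E_odd t 0
    have e2 : E (2 * t) 0 = t ^ 2 := by simpa using E_even t 0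
    have hb := b_even t
    rw [show 2*t+1+1 = 2*t+2 from rfl, G, G, show (2*t+1 : ℕ) - 1 = 2*t by omega, hb, e1, e2]
    have hp : P (2 * t + 1) 0 = P (2 * t) 0 * Z (4 * t + 3) := by
      have := P_succ_right (2 * t) 0
      rw [this]; congr 2; omega
    rw [hp]
    have hq := q_ne_zero
    have hz := Z_ne_zero (4 * t + 3) (by omega)
    have hP := P_ne_zero (2 * t) 0
    have hf := qfact_ne_zero 1
    rw [div_mul_div_comm, div_eq_div_iff
      (mul_ne_zero (pow_ne_zero _ hq) (mul_ne_zero hf (mul_ne_zero hP hz)))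
      (mul_ne_zero hf hP)]
    ring

/-- main coefficient recurrence: `g_{n+1,k} = b_{n+1} g_{n,k+1} - g_{n-1,k+1}` -/
lemma G_rec (n k : ℕ) (hn : 1 ≤ n) :
    G (n + 1) k = b (n + 1) * G n (k + 1) - G (n - 1) (k + 1) := by
  have hq := q_ne_zero
  have hf1 := qfact_ne_zero (2 * k + 1)
  have hz2 := Z_ne_zero (2 * k + 2) (by omega)
  have hz3 := Z_ne_zero (2 * k + 3) (by omega)
  rcases Nat.even_or_odd n with ⟨t, ht⟩ | ⟨t, ht⟩
  · -- n = 2t+2 (t ≥ 0 since n even ≥ 1 means n ≥ 2)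
    obtain ⟨s, hs⟩ : ∃ s, t = s + 1 := ⟨t - 1, by omega⟩
    have hn2 : n = 2 * s + 2 := by omega
    subst hn2
    rw [show 2*s+2+1 = 2*(s+1)+1 by ring, show (2*s+2 : ℕ) - 1 = 2*s+1 by omega]
    rw [G, G, G, b_odd (s+1)]
    rw [show E (2*(s+1)+1) k = (k+s+2)^2 + (s+2)*(2*s+3) by
      rw [E_odd (s+1) k]; ring_nf]
    rw [show E (2*s+2) (k+1) = (k+s+2)^2 by
      have := E_even (s+1) (k+1); rw [show 2*(s+1) = 2*s+2 by ring] at this; rw [this]; ring]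
    rw [E_odd s (k+1)]
    rw [show P (2*(s+1)+1) k = Z (2*k+3) * (P (2*s+1) (k+1) * Z (2*k+4*s+7)) by
      rw [show 2*(s+1)+1 = (2*s+2)+1 by ring, P_succ,
        show 2*s+2 = (2*s+1)+1 by ring, P_succ_right,
        show 2*(k+1+(2*s+1))+3 = 2*k+4*s+7 by ring]]
    rw [show P (2*s+2) (k+1) = P (2*s+1) (k+1) * Z (2*k+4*s+7) by
      rw [show 2*s+2 = (2*s+1)+1 by ring, P_succ_right,
        show 2*(k+1+(2*s+1))+3 = 2*k+4*s+7 by ring]]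
    rw [show (2*(k+1)+1) = 2*k+3 by ring, qfact_two]
    have hz5 := Z_ne_zero (4*s+5) (by omega)
    have hz45 := Z_ne_zero (2*k+4*s+7) (by omega)
    have hP := P_ne_zero (2*s+1) (k+1)
    rw [eq_sub_iff_add_eq, div_add_div _ _
        (mul_ne_zero hf1 (mul_ne_zero hz3 (mul_ne_zero hP hz45)))
        (mul_ne_zero (mul_ne_zero (mul_ne_zero hf1 hz2) hz3) hP),
      div_mul_div_comm, div_eq_div_iff
        (mul_ne_zero (mul_ne_zero hf1 (mul_ne_zero hz3 (mul_ne_zero hP hz45)))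
          (mul_ne_zero (mul_ne_zero (mul_ne_zero hf1 hz2) hz3) hP))
        (mul_ne_zero (pow_ne_zero _ hq)
          (mul_ne_zero (mul_ne_zero (mul_ne_zero hf1 hz2) hz3) (mul_ne_zero hP hz45)))]
    rw [show Z (2*k+4*s+7) = Z (4*s+5) + q^(4*s+5) * Z (2*k+2) by
      rw [← Z_add]; congr 1; omega]
    ring_nf
  · -- n = 2t+1
    subst ht
    rw [show 2*t+1+1 = 2*t+2 by ring, show (2*t+1 : ℕ) - 1 = 2*t by omega]
    rw [G, G, G, b_even t]
    rw [show E (2*t+2) k = (k+t+1)^2 by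
      have := E_even (t+1) k; rw [show 2*(t+1) = 2*t+2 by ring] at this; rw [this]; ring]
    rw [E_odd t (k+1)]
    rw [show E (2*t) (k+1) = (k+t+1)^2 by rw [E_even t (k+1)]; ring]
    rw [show P (2*t+2) k = Z (2*k+3) * (P (2*t) (k+1) * Z (2*k+4*t+5)) by
      rw [show 2*t+2 = (2*t+1)+1 by ring, P_succ,
        show 2*t+1 = (2*t)+1 by ring, P_succ_right,
        show 2*(k+1+2*t)+3 = 2*k+4*t+5 by ring]]
    rw [show P (2*t+1) (k+1) = P (2*t) (k+1) * Z (2*k+4*t+5) by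
      rw [show 2*t+1 = (2*t)+1 by ring, P_succ_right,
        show 2*(k+1+2*t)+3 = 2*k+4*t+5 by ring]]
    rw [show (2*(k+1)+1) = 2*k+3 by ring, qfact_two]
    have hz4 := Z_ne_zero (4*t+3) (by omega)
    have hz45 := Z_ne_zero (2*k+4*t+5) (by omega)
    have hP := P_ne_zero (2*t) (k+1)
    rw [eq_sub_iff_add_eq, div_add_div _ _
        (mul_ne_zero hf1 (mul_ne_zero hz3 (mul_ne_zero hP hz45)))
        (mul_ne_zero (mul_ne_zero (mul_ne_zero hf1 hz2) hz3) hP),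
      div_mul_div_comm, div_eq_div_iff
        (mul_ne_zero (mul_ne_zero hf1 (mul_ne_zero hz3 (mul_ne_zero hP hz45)))
          (mul_ne_zero (mul_ne_zero (mul_ne_zero hf1 hz2) hz3) hP))
        (mul_ne_zero (pow_ne_zero _ hq)
          (mul_ne_zero (mul_ne_zero (mul_ne_zero hf1 hz2) hz3) (mul_ne_zero hP hz45)))]
    rw [show Z (2*k+4*t+5) = Z (2*k+2) + q^(2*k+2) * Z (4*t+3) by
      rw [← Z_add]; congr 1; omega]
    ring_nf

/-- the `n = 0` variant of the recurrence, against the cosine coefficients -/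
lemma G_rec0 (k : ℕ) :
    G 1 k = b 1 * G 0 (k + 1) - ((-1) ^ (k+1) * q ^ ((k+1)^2) / qfact (2*k+2)) := by
  have hq := q_ne_zero
  have hf1 := qfact_ne_zero (2 * k + 1)
  have hz2 := Z_ne_zero (2 * k + 2) (by omega)
  have hz3 := Z_ne_zero (2 * k + 3) (by omega)
  rw [G, G, b_one, one_mul]
  rw [show E 1 k = (k+1)^2 + 1 by have := E_odd 0 k; simpa using this]
  rw [show E 0 (k+1) = (k+1)^2 by have := E_even 0 (k+1); simpa using this]
  rw [show P 1 k = Z (2*k+3) by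
    rw [show (1:ℕ) = 0+1 from rfl, P_succ, P_zero, mul_one]]
  rw [P_zero, mul_one]
  rw [show (2*(k+1)+1) = 2*k+3 by ring, qfact_two]
  rw [show qfact (2*k+2) = qfact (2*k+1) * Z (2*k+2) by
    rw [show 2*k+2 = 2*k+1+1 by ring, qfact_succ]]
  rw [eq_sub_iff_add_eq, div_add_div _ _
      (mul_ne_zero hf1 hz3)
      (mul_ne_zero hf1 hz2),
    div_eq_div_iff
      (mul_ne_zero (mul_ne_zero hf1 hz3) (mul_ne_zero hf1 hz2))
      (mul_ne_zero (mul_ne_zero hf1 hz2) hz3)]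
  rw [show Z (2*k+3) = 1 + q * Z (2*k+2) by
    rw [show 2*k+3 = 1 + (2*k+2) by ring, Z_add, Z_one, pow_one]]
  ring

open PowerSeries

/-- coefficients of the remainder series -/
def Gc (n : ℕ) (m : ℕ) : K :=
  if m % 2 = 0 ∧ 2 * (n + 1) ≤ m then G n (m / 2 - (n + 1)) else 0

/-- the remainder series: `Gser 0 = cos_q`, `Gser (n+1) = ∑_k g_{n,k} z^{2(n+1+k)}` -/
def Gser : ℕ → PowerSeries K
  | 0 => cosq
  | n + 1 => PowerSeries.mk (Gc n)

def Fser (m : ℕ) : PowerSeries K :=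
  (A m : PowerSeries K) * cosq + PowerSeries.X * (B m : PowerSeries K) * sinq

lemma coeff_X_sq_mul (f : PowerSeries K) (m : ℕ) :
    coeff (R := K) m (X ^ 2 * f) = if 2 ≤ m then coeff (R := K) (m - 2) f else 0 := by
  rcases le_or_gt 2 m with h | h
  · rw [if_pos h]
    obtain ⟨d, rfl⟩ : ∃ d, m = d + 2 := ⟨m - 2, by omega⟩
    rw [coeff_X_pow_mul]
    simp
  · rw [if_neg (by omega)]
    rw [mul_comm, coeff_mul_X_pow']
    rw [if_neg (by omega)]

lemma Gser_one : Gser 1 = X * sinq := by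
  ext m
  rw [Gser, coeff_mk]
  rw [show (X : PowerSeries K) * sinq = sinq * X ^ 1 by ring, coeff_mul_X_pow']
  rcases Nat.even_or_odd m with ⟨j, hj⟩ | ⟨j, hj⟩
  · rcases Nat.eq_zero_or_pos j with hj0 | hjpos
    · subst hj0
      simp only [Gc]
      rw [if_neg (by omega), if_neg (by omega)]
    · rw [Gc, if_pos (by omega), if_pos (by omega)]
      rw [sinq, coeff_mk, if_pos (by omega)]
      rw [G]
      rw [show E 0 (m/2 - 1) = (m/2-1)^2 by have := E_even 0 (m/2-1); simpa using this]
      rw [P_zero, mul_one]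
      have h1 : (m - 1) / 2 = m / 2 - 1 := by omega
      have h2 : m - 1 = 2 * (m / 2 - 1) + 1 := by omega
      rw [h1, ← h2]
  · rw [Gc, if_neg (by omega)]
    rcases Nat.eq_zero_or_pos m with h0 | hpos
    · rw [if_neg (by omega)]
    · rw [if_pos (by omega), sinq, coeff_mk, if_neg (by omega)]

lemma qfact_one : qfact 1 = 1 := by
  rw [show (1:ℕ) = 0+1 from rfl, qfact_succ, Z_one]
  simp [qfact]

lemma G_zero_zero : G 0 0 = 1 := by
  rw [G, show E 0 0 = 0 by have := E_even 0 0; simpa using this, P_zero, qfact_one]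
  norm_num

lemma cosq_coeff (m : ℕ) :
    coeff (R := K) m cosq = if m % 2 = 0 then (-1 : K) ^ (m / 2) * q ^ ((m / 2) ^ 2) / qfact m else 0 := by
  rw [cosq, coeff_mk]

lemma Grec : ∀ n : ℕ, Gser (n + 2) = PowerSeries.C (R := K) (b (n + 1)) * Gser (n + 1) - X ^ 2 * Gser n
  | 0 => by
    rw [show Gser 2 = PowerSeries.mk (Gc 1) from rfl, show Gser 1 = PowerSeries.mk (Gc 0) from rfl,
      show Gser 0 = cosq from rfl]
    ext m
    rw [coeff_mk, map_sub, coeff_C_mul, coeff_mk, coeff_X_sq_mul, b_one, one_mul, cosq_coeff]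
    simp only [Gc]
    rcases Nat.even_or_odd m with ⟨j, hj⟩ | ⟨j, hj⟩
    · rcases lt_or_ge m 4 with hm | hm
      · rcases Nat.eq_zero_or_pos m with h0 | hpos
        · subst h0
          rw [if_neg (show ¬((0:ℕ) % 2 = 0 ∧ 2 * (1+1) ≤ 0) by omega),
            if_neg (show ¬((0:ℕ) % 2 = 0 ∧ 2 * (0+1) ≤ 0) by omega),
            if_neg (show ¬(2 ≤ 0) by omega)]
          ring
        · have hm2 : m = 2 := by omega
          subst hm2
          rw [if_neg (show ¬((2:ℕ) % 2 = 0 ∧ 2 * (1+1) ≤ 2) by omega),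
            if_pos (show (2:ℕ) % 2 = 0 ∧ 2 * (0+1) ≤ 2 by omega),
            if_pos (show 2 ≤ 2 by omega),
            if_pos (show (2-2:ℕ) % 2 = 0 by omega)]
          rw [show (2:ℕ)/2 - (0+1) = 0 by omega, G_zero_zero]
          norm_num [qfact]
      · rw [if_pos (show m % 2 = 0 ∧ 2 * (1+1) ≤ m by omega),
          if_pos (show m % 2 = 0 ∧ 2 * (0+1) ≤ m by omega),
          if_pos (show 2 ≤ m by omega),
          if_pos (show (m-2) % 2 = 0 by omega)]
        have key := G_rec0 (m/2 - 2)
        rw [b_one, one_mul] at key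
        rw [show m / 2 - (1+1) = m/2 - 2 by omega,
          show m / 2 - (0+1) = (m/2-2)+1 by omega,
          show (m-2)/2 = (m/2-2)+1 by omega,
          show m-2 = 2*(m/2-2)+2 by omega,
          key]
    · rw [if_neg (show ¬(m % 2 = 0 ∧ 2 * (1+1) ≤ m) by omega),
        if_neg (show ¬(m % 2 = 0 ∧ 2 * (0+1) ≤ m) by omega)]
      rcases lt_or_ge m 2 with hm | hm
      · rw [if_neg (show ¬(2 ≤ m) by omega)]; ring
      · rw [if_pos hm, if_neg (show ¬((m-2) % 2 = 0) by omega)]; ring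
  | (n + 1) => by
    rw [show Gser (n+3) = PowerSeries.mk (Gc (n+2)) from rfl,
      show Gser (n+2) = PowerSeries.mk (Gc (n+1)) from rfl,
      show Gser (n+1) = PowerSeries.mk (Gc n) from rfl]
    ext m
    rw [coeff_mk, map_sub, coeff_C_mul, coeff_mk, coeff_X_sq_mul]
    simp only [coeff_mk]
    simp only [Gc]
    rcases Nat.even_or_odd m with ⟨j, hj⟩ | ⟨j, hj⟩
    · rcases lt_or_ge m (2*(n+3)) with hm | hm
      · rw [if_neg (show ¬(m % 2 = 0 ∧ 2 * (n+2+1) ≤ m) by omega)]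
        rcases lt_or_ge m (2*(n+2)) with hm2 | hm2
        · rw [if_neg (show ¬(m % 2 = 0 ∧ 2 * (n+1+1) ≤ m) by omega)]
          rcases lt_or_ge m 2 with hm3 | hm3
          · rw [if_neg (show ¬(2 ≤ m) by omega)]; ring
          · rw [if_pos hm3, if_neg (show ¬((m-2) % 2 = 0 ∧ 2 * (n+1) ≤ m-2) by omega)]
            ring
        · rw [if_pos (show m % 2 = 0 ∧ 2 * (n+1+1) ≤ m by omega),
            if_pos (show 2 ≤ m by omega),
            if_pos (show (m-2) % 2 = 0 ∧ 2 * (n+1) ≤ m-2 by omega)]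
          rw [show m / 2 - (n+1+1) = 0 by omega, show (m-2)/2 - (n+1) = 0 by omega]
          have key := G_low (n+1) (by omega)
          rw [show (n+1) - 1 = n by omega] at key
          rw [show n+1+1 = n+2 from rfl, key]
          ring
      · rw [if_pos (show m % 2 = 0 ∧ 2 * (n+2+1) ≤ m by omega),
          if_pos (show m % 2 = 0 ∧ 2 * (n+1+1) ≤ m by omega),
          if_pos (show 2 ≤ m by omega),
          if_pos (show (m-2) % 2 = 0 ∧ 2 * (n+1) ≤ m-2 by omega)]
        have key := G_rec (n+1) (m/2 - (n+3)) (by omega)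
        rw [show (n+1) - 1 = n by omega, show n+1+1 = n+2 from rfl] at key
        rw [show m / 2 - (n+2+1) = m/2 - (n+3) by omega,
          show m / 2 - (n+1+1) = (m/2 - (n+3)) + 1 by omega,
          show (m-2) / 2 - (n+1) = (m/2 - (n+3)) + 1 by omega,
          key]
    · rw [if_neg (show ¬(m % 2 = 0 ∧ 2 * (n+2+1) ≤ m) by omega),
        if_neg (show ¬(m % 2 = 0 ∧ 2 * (n+1+1) ≤ m) by omega)]
      rcases lt_or_ge m 2 with hm | hm
      · rw [if_neg (show ¬(2 ≤ m) by omega)]; ring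
      · rw [if_pos hm, if_neg (show ¬((m-2) % 2 = 0 ∧ 2 * (n+1) ≤ m-2) by omega)]
        ring

lemma Fser_zero : Fser 0 = cosq := by
  rw [Fser, show A 0 = 1 from rfl, show B 0 = 0 from rfl]
  simp

lemma Fser_one : Fser 1 = X * sinq := by
  rw [Fser, show A 1 = 0 from rfl, show B 1 = 1 from rfl]
  simp

lemma Frec (n : ℕ) : Fser (n + 2) = PowerSeries.C (R := K) (b (n + 1)) * Fser (n + 1) - X ^ 2 * Fser n := by
  rw [Fser, Fser, Fser,
    show A (n+2) = Polynomial.C (b (n + 1)) * A (n + 1) - Polynomial.X ^ 2 * A n from rfl,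
    show B (n+2) = Polynomial.C (b (n + 1)) * B (n + 1) - Polynomial.X ^ 2 * B n from rfl,
    Polynomial.coe_sub, Polynomial.coe_sub, Polynomial.coe_mul, Polynomial.coe_mul,
    Polynomial.coe_mul, Polynomial.coe_mul, Polynomial.coe_C, Polynomial.coe_pow,
    Polynomial.coe_X]
  ring

lemma FG : ∀ m : ℕ, Fser m = Gser m := by
  intro m
  induction m using Nat.twoStepInduction with
  | zero => rw [Fser_zero]; rfl
  | one => rw [Fser_one, Gser_one]
  | more n ih1 ih2 => rw [Frec, Grec, ih1, ih2]

/-- Prodinger's conjecture: for every `n ≥ 1`, the power series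
`A_n(z) + z·B_n(z)·tan_q(z)` has vanishing coefficients of `z^m` for all
`0 ≤ m ≤ 2n`, i.e. the `n`-th convergent `A_n/B_n` of the continued fraction
with partial denominators `b_1, b_2, …` and partial numerators `-z²`
agrees with `-z·tan_q(z)` to order `z^(2n)`. -/
theorem prodinger_continued_fraction (n : ℕ) (hn : 1 ≤ n) (m : ℕ) (hm : m ≤ 2 * n) :
    PowerSeries.coeff (R := K) m
      ((A (n + 1) : PowerSeries K) +
        PowerSeries.X * (B (n + 1) : PowerSeries K) * tanq) = 0 := by
  have hc : constantCoeff (R := K) cosq ≠ 0 := by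
    rw [cosq, constantCoeff_mk]
    norm_num [qfact]
  have hinv : cosq * cosq⁻¹ = 1 := PowerSeries.mul_inv_cancel _ hc
  have hT : (A (n + 1) : PowerSeries K) + X * (B (n + 1) : PowerSeries K) * tanq
      = Fser (n + 1) * cosq⁻¹ := by
    rw [tanq, Fser]
    linear_combination (-(A (n + 1) : PowerSeries K)) * hinv
  rw [hT, FG (n + 1), show Gser (n + 1) = PowerSeries.mk (Gc n) from rfl, coeff_mul]
  apply Finset.sum_eq_zero
  intro p hp
  have hpm : p.1 + p.2 = m := Finset.HasAntidiagonal.mem_antidiagonal.mp hp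
  rw [coeff_mk, Gc, if_neg (by omega), zero_mul]
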